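/- arXiv:1805.02633 — 4 statements merged into one kernel-verified Lean document; each statement's English description precedes it below -/
import Mathlib

section
/- Let N ≥ 1, let Ω ⊆ ℝ^N be a bounded open set whose topological boundary ∂Ω satisfies 𝓗^{N−1}(∂Ω) < ∞, let g : ℝ^N → ℝ be continuous and nonnegative on ∂Ω with 0 < ∫_{∂Ω} g d𝓗^{N−1} < ∞, and let α satisfy 0 < α < 𝓛^N(Ω). Then the supremum sup{ ∫_{∂Ω} g v d𝓗^{N−1} : v : closure(Ω) → ℝ is Lipschitz with constant 1 and 𝓛^N({x ∈ Ω : v(x) > 0}) ≤ α } is finite and attained: there exists a function u_∞, Lipschitz with constant 1 on closure(Ω), with 𝓛^N({x ∈ Ω : u_∞(x) > 0}) ≤ α, such that ∫_{∂Ω} g u_∞ d𝓗^{N−1} equals this supremum. -/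
open MeasureTheory Metric Set
open scoped ENNReal NNReal
open Filter TopologicalSpace

/-!
Every admissible `v` lies below `infDist · C` on `closure Ω`, where `C = closure Ω ∩ {v ≤ 0}` is
again admissible, so it suffices to maximise `C ↦ ∫_{∂Ω} g · dist(·, C)` over the nonempty compact
sets `C ⊆ closure Ω` with `|Ω \ C| ≤ α`. For the Hausdorff metric these form a compact family (a
point outside the limit set is eventually outside the approximating sets, so the volume constraint
is closed), and the functional is Lipschitz with constant `∫_{∂Ω} |g|`; hence the maximum is
attained.
-/

section

variable {X : Type*} [MetricSpace X]

theorem LipschitzOnWith.le_infDist_inter_setOf_nonpos {K : Set X} {v : X → ℝ}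
    (hv : LipschitzOnWith 1 v K) (hne : (K ∩ {y | v y ≤ 0}).Nonempty) {x : X} (hx : x ∈ K) :
    v x ≤ infDist x (K ∩ {y | v y ≤ 0}) := by
  refine (le_infDist hne).2 fun y ⟨hyK, (hy : v y ≤ 0)⟩ => ?_
  have := hv.dist_le_mul x hx y hyK
  rw [NNReal.coe_one, one_mul, Real.dist_eq] at this
  linarith [le_abs_self (v x - v y)]

variable [MeasurableSpace X]

theorem MeasureTheory.IntegrableOn.mul_of_lipschitzOnWith [OpensMeasurableSpace X]
    {μ : Measure X} {s : Set X} {g v : X → ℝ} {K : ℝ≥0} (hg : IntegrableOn g s μ)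
    (hs : Bornology.IsBounded s) (hsm : MeasurableSet s) (hv : LipschitzOnWith K v s) :
    IntegrableOn (fun x => g x * v x) s μ := by
  obtain ⟨w, hw, hvw⟩ := hv.extend_real
  obtain ⟨c, hc⟩ := isBounded_iff_forall_norm_le.1 (hw.isBounded_image hs)
  refine hg.mul_bdd (c := c) (hv.continuousOn.aestronglyMeasurable hsm)
    ((ae_restrict_iff' hsm).2 (ae_of_all _ fun x hx => ?_))
  rw [hvw hx]
  exact hc _ (mem_image_of_mem w hx)

theorem exists_nonemptyCompacts_le_infDist (ν : Measure X) {K t : Set X} (hK : IsCompact K)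
    (htK : t ⊆ K) {v : X → ℝ} (hv : LipschitzOnWith 1 v K)
    (hvt : ν {x ∈ t | 0 < v x} < ν t) :
    ∃ C : NonemptyCompacts X, (C : Set X) ⊆ K ∧ ν (t \ C) ≤ ν {x ∈ t | 0 < v x} ∧
      ∀ x ∈ K, v x ≤ infDist x C := by
  have hsub : t \ (K ∩ {y | v y ≤ 0}) ⊆ {x ∈ t | 0 < v x} := fun x ⟨hxt, hx⟩ =>
    ⟨hxt, lt_of_not_ge fun h => hx ⟨htK hxt, h⟩⟩
  have hne : (K ∩ {y | v y ≤ 0}).Nonempty := by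
    by_contra h
    rw [not_nonempty_iff_eq_empty] at h
    rw [h, sdiff_empty] at hsub
    exact hvt.not_ge (measure_mono hsub)
  have hclosed : IsClosed (K ∩ {y | v y ≤ 0}) :=
    hv.continuousOn.preimage_isClosed_of_isClosed hK.isClosed isClosed_Iic
  exact ⟨⟨⟨_, hK.of_isClosed_subset hclosed inter_subset_left⟩, hne⟩, inter_subset_left,
    measure_mono hsub, fun x hx => hv.le_infDist_inter_setOf_nonpos hne hx⟩

theorem TopologicalSpace.NonemptyCompacts.isClosed_setOf_measure_diff_le (ν : Measure X)
    (t : Set X) (a : ℝ≥0∞) : IsClosed {C : NonemptyCompacts X | ν (t \ C) ≤ a} := by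
  refine IsSeqClosed.isClosed fun c C hc hcC => ?_
  have hsub : t \ C ⊆ ⋃ n, ⋂ m ≥ n, t \ c m := by
    rintro x ⟨hxt, hxC⟩
    have hev : ∀ᶠ n in atTop, (c n : Set X) ⊆ {x}ᶜ :=
      hcC.eventually ((isOpen_subsets_of_isOpen isOpen_compl_singleton).mem_nhds
        (by simpa using hxC))
    obtain ⟨n, hn⟩ := hev.exists_forall_of_atTop
    exact mem_iUnion.2 ⟨n, mem_iInter₂.2 fun m hm => ⟨hxt, fun hxm => hn m hm hxm rfl⟩⟩
  have hmono : Monotone fun n => ⋂ m ≥ n, t \ c m := fun n k hnk =>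
    biInter_mono (fun m hm => hnk.trans hm) fun _ _ => le_rfl
  calc ν (t \ C) ≤ ν (⋃ n, ⋂ m ≥ n, t \ c m) := measure_mono hsub
    _ = ⨆ n, ν (⋂ m ≥ n, t \ c m) := hmono.measure_iUnion
    _ ≤ a := iSup_le fun n => (measure_mono (biInter_subset_of_mem le_rfl)).trans (hc n)

theorem dist_setIntegral_mul_infDist_le [OpensMeasurableSpace X] {μ : Measure X} {s : Set X}
    {g : X → ℝ} (hg : IntegrableOn g s μ) (hs : Bornology.IsBounded s) (hsm : MeasurableSet s)
    (C D : NonemptyCompacts X) :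
    dist (∫ x in s, g x * infDist x C ∂μ) (∫ x in s, g x * infDist x D ∂μ) ≤
      (∫ x in s, |g x| ∂μ) * dist C D := by
  have hint : ∀ C : NonemptyCompacts X, IntegrableOn (fun x => g x * infDist x C) s μ := fun C =>
    hg.mul_of_lipschitzOnWith hs hsm (lipschitz_infDist_pt _).lipschitzOnWith
  rw [Real.dist_eq, ← Real.norm_eq_abs, ← integral_sub (hint C) (hint D),
    ← integral_mul_const (dist C D)]
  refine norm_integral_le_of_norm_le (hg.abs.mul_const _) (ae_of_all _ fun x => ?_)
  have := (lipschitz_infDist_set x).dist_le_mul C D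
  rw [NNReal.coe_one, one_mul, Real.dist_eq] at this
  rw [← mul_sub, Real.norm_eq_abs, abs_mul]
  exact mul_le_mul_of_nonneg_left this (abs_nonneg _)

theorem continuous_setIntegral_mul_infDist [OpensMeasurableSpace X] {μ : Measure X} {s : Set X}
    {g : X → ℝ} (hg : IntegrableOn g s μ) (hs : Bornology.IsBounded s) (hsm : MeasurableSet s) :
    Continuous fun C : NonemptyCompacts X => ∫ x in s, g x * infDist x C ∂μ :=
  (LipschitzWith.of_dist_le_mul (K := ⟨_, integral_nonneg fun x => abs_nonneg (g x)⟩)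
    (dist_setIntegral_mul_infDist_le hg hs hsm)).continuous

end

theorem limit_problem_sup_attained_general (N : ℕ)
    (Ω : Set (EuclideanSpace ℝ (Fin N)))
    (hΩb : Bornology.IsBounded Ω)
    (g : EuclideanSpace ℝ (Fin N) → ℝ)
    (hg0 : ∀ x ∈ frontier Ω, 0 ≤ g x)
    (hgint : IntegrableOn g (frontier Ω) μH[(N : ℝ) - 1])
    (α : ℝ) (hα : ENNReal.ofReal α < volume Ω) :
    ∃ u : EuclideanSpace ℝ (Fin N) → ℝ,
      LipschitzOnWith 1 u (closure Ω) ∧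
      volume {x ∈ Ω | 0 < u x} ≤ ENNReal.ofReal α ∧
      ∀ v : EuclideanSpace ℝ (Fin N) → ℝ,
        LipschitzOnWith 1 v (closure Ω) →
        volume {x ∈ Ω | 0 < v x} ≤ ENNReal.ofReal α →
        ∫ x in frontier Ω, g x * v x ∂μH[(N : ℝ) - 1] ≤
          ∫ x in frontier Ω, g x * u x ∂μH[(N : ℝ) - 1] := by
  have hK := hΩb.isCompact_closure
  have hF : Bornology.IsBounded (frontier Ω) := hΩb.closure.subset frontier_subset_closure
  have hFm : MeasurableSet (frontier Ω) := isClosed_frontier.measurableSet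
  set A := {C : NonemptyCompacts (EuclideanSpace ℝ (Fin N)) |
    (C : Set _) ⊆ closure Ω ∧ volume (Ω \ C) ≤ .ofReal α}
  have hA : IsCompact A := (NonemptyCompacts.isCompact_subsets_of_isCompact hK).inter_right
    (NonemptyCompacts.isClosed_setOf_measure_diff_le _ _ _)
  obtain ⟨C₀, hC₀K, hC₀, -⟩ := exists_nonemptyCompacts_le_infDist volume hK subset_closure
    (LipschitzWith.const' (0 : ℝ)).lipschitzOnWith (by simpa using hα.bot_lt)
  obtain ⟨C, ⟨-, hCα⟩, hCmax⟩ := hA.exists_isMaxOn ⟨C₀, hC₀K, hC₀.trans (by simp)⟩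
    (continuous_setIntegral_mul_infDist hgint hF hFm).continuousOn
  refine ⟨(infDist · C), (lipschitz_infDist_pt _).lipschitzOnWith, ?_, fun v hv hvα => ?_⟩
  · refine (measure_mono fun x (hx : x ∈ Ω ∧ 0 < infDist x C) => ?_).trans hCα
    exact ⟨hx.1, fun hxC => hx.2.ne' (infDist_zero_of_mem hxC)⟩
  obtain ⟨Cv, hCvK, hCvα, hvCv⟩ := exists_nonemptyCompacts_le_infDist volume hK subset_closure hv
    (hvα.trans_lt hα)
  calc ∫ x in frontier Ω, g x * v x ∂μH[(N : ℝ) - 1]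
      ≤ ∫ x in frontier Ω, g x * infDist x Cv ∂μH[(N : ℝ) - 1] :=
        setIntegral_mono_on (hgint.mul_of_lipschitzOnWith hF hFm (hv.mono frontier_subset_closure))
          (hgint.mul_of_lipschitzOnWith hF hFm (lipschitz_infDist_pt _).lipschitzOnWith) hFm
          fun x hx => mul_le_mul_of_nonneg_left (hvCv x (frontier_subset_closure hx)) (hg0 x hx)
    _ ≤ _ := hCmax ⟨hCvK, hCvα.trans hvα⟩

/-- The limiting volume-constrained maximization problem `𝔓_∞[α]` admits a maximizer:
there is a `1`-Lipschitz function `u` on `closure Ω` whose positivity set in `Ω` has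
Lebesgue measure at most `α`, maximizing the boundary functional
`v ↦ ∫_{∂Ω} g v dℋ^{N-1}` among all such admissible functions. -/
theorem limit_problem_sup_attained (N : ℕ) (hN : 1 ≤ N)
    (Ω : Set (EuclideanSpace ℝ (Fin N))) (hΩo : IsOpen Ω)
    (hΩb : Bornology.IsBounded Ω)
    (hH : μH[(N : ℝ) - 1] (frontier Ω) < ⊤)
    (g : EuclideanSpace ℝ (Fin N) → ℝ) (hgc : Continuous g)
    (hg0 : ∀ x ∈ frontier Ω, 0 ≤ g x)
    (hgint : IntegrableOn g (frontier Ω) μH[(N : ℝ) - 1])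
    (hgpos : 0 < ∫ x in frontier Ω, g x ∂μH[(N : ℝ) - 1])
    (α : ℝ) (hα0 : 0 < α) (hα : ENNReal.ofReal α < volume Ω) :
    ∃ u : EuclideanSpace ℝ (Fin N) → ℝ,
      LipschitzOnWith 1 u (closure Ω) ∧
      volume {x ∈ Ω | 0 < u x} ≤ ENNReal.ofReal α ∧
      ∀ v : EuclideanSpace ℝ (Fin N) → ℝ,
        LipschitzOnWith 1 v (closure Ω) →
        volume {x ∈ Ω | 0 < v x} ≤ ENNReal.ofReal α →
        ∫ x in frontier Ω, g x * v x ∂μH[(N : ℝ) - 1] ≤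
          ∫ x in frontier Ω, g x * u x ∂μH[(N : ℝ) - 1] :=
  limit_problem_sup_attained_general N Ω hΩb g hg0 hgint α hα
end

section
/- Let 0 < α < 2 and let v : [−1, 1] → ℝ be Lipschitz with constant 1 with 𝓛^1({x ∈ (−1, 1) : v(x) > 0}) ≤ α, where 𝓛^1 is one-dimensional Lebesgue measure. Then v(−1) + v(1) ≤ α. -/
open MeasureTheory Set
open scoped ENNReal

/-- On `Ω = (−1, 1)`, any `1`-Lipschitz function `v` on `[−1, 1]` whose positivity
set in `(−1, 1)` has Lebesgue measure at most `α < 2` satisfies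
`v(−1) + v(1) ≤ α`. -/
theorem boundary_values_sum_le_of_volume_constraint
    (α : ℝ) (hα0 : 0 < α) (hα2 : α < 2)
    (v : ℝ → ℝ) (hv : LipschitzOnWith 1 v (Icc (-1) 1))
    (hvol : volume {x ∈ Ioo (-1 : ℝ) 1 | 0 < v x} ≤ ENNReal.ofReal α) :
    v (-1) + v 1 ≤ α := by
  set a : ℝ := max (v (-1)) 0 with ha
  set b : ℝ := max (v 1) 0 with hb
  have ha0 : 0 ≤ a := le_max_right _ _
  have hb0 : 0 ≤ b := le_max_right _ _
  have key : a + b ≤ α := by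
    -- Lipschitz estimates
    have hm1 : (-1 : ℝ) ∈ Icc (-1 : ℝ) 1 := by constructor <;> norm_num
    have hp1 : (1 : ℝ) ∈ Icc (-1 : ℝ) 1 := by constructor <;> norm_num
    have L1 : ∀ x ∈ Ioo (-1 : ℝ) 1, x + 1 < v (-1) → 0 < v x := by
      intro x hx hlt
      have hxI : x ∈ Icc (-1 : ℝ) 1 := ⟨hx.1.le, hx.2.le⟩
      have h := hv.dist_le_mul (-1) hm1 x hxI
      simp only [NNReal.coe_one, ENNReal.coe_one, one_mul, Real.dist_eq] at h
      have h2 : v (-1) - v x ≤ |(-1 : ℝ) - x| := (le_abs_self _).trans h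
      have h3 : |(-1 : ℝ) - x| = x + 1 := by
        rw [abs_sub_comm, abs_of_nonneg (by linarith [hx.1])]; ring
      rw [h3] at h2; linarith
    have L2 : ∀ x ∈ Ioo (-1 : ℝ) 1, 1 - x < v 1 → 0 < v x := by
      intro x hx hlt
      have hxI : x ∈ Icc (-1 : ℝ) 1 := ⟨hx.1.le, hx.2.le⟩
      have h := hv.dist_le_mul 1 hp1 x hxI
      simp only [NNReal.coe_one, ENNReal.coe_one, one_mul, Real.dist_eq] at h
      have h2 : v 1 - v x ≤ |(1 : ℝ) - x| := (le_abs_self _).trans h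
      have h3 : |(1 : ℝ) - x| = 1 - x := abs_of_nonneg (by linarith [hx.2])
      rw [h3] at h2; linarith
    by_cases hcase : -1 + a ≤ 1 - b
    · -- disjoint intervals
      have hsub : Ioo (-1 : ℝ) (-1 + a) ∪ Ioo (1 - b) 1 ⊆
          {x ∈ Ioo (-1 : ℝ) 1 | 0 < v x} := by
        rintro x (hx | hx)
        · have hxO : x ∈ Ioo (-1 : ℝ) 1 := ⟨hx.1, lt_of_lt_of_le hx.2 (by linarith)⟩
          refine ⟨hxO, ?_⟩
          rcases lt_max_iff.mp (show x + 1 < a by linarith [hx.2]) with h | h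
          · exact L1 x hxO h
          · linarith [hx.1]
        · have hxO : x ∈ Ioo (-1 : ℝ) 1 := ⟨lt_of_le_of_lt (by linarith) hx.1, hx.2⟩
          refine ⟨hxO, ?_⟩
          rcases lt_max_iff.mp (show 1 - x < b by linarith [hx.1]) with h | h
          · exact L2 x hxO h
          · linarith [hx.2]
      have hdisj : Disjoint (Ioo (-1 : ℝ) (-1 + a)) (Ioo (1 - b) 1) := by
        rw [Set.disjoint_left]
        rintro x hx hx'
        linarith [hx.2, hx'.1]
      have hmeas : volume (Ioo (-1 : ℝ) (-1 + a) ∪ Ioo (1 - b) 1) =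
          ENNReal.ofReal a + ENNReal.ofReal b := by
        rw [measure_union hdisj measurableSet_Ioo, Real.volume_Ioo, Real.volume_Ioo]
        norm_num
      have hle : ENNReal.ofReal (a + b) ≤ ENNReal.ofReal α := by
        rw [ENNReal.ofReal_add ha0 hb0, ← hmeas]
        exact (measure_mono hsub).trans hvol
      exact (ENNReal.ofReal_le_ofReal_iff hα0.le).mp hle
    · exfalso
      push_neg at hcase
      have hsub : Ioo (-1 : ℝ) 1 ⊆ {x ∈ Ioo (-1 : ℝ) 1 | 0 < v x} := by
        intro x hx
        refine ⟨hx, ?_⟩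
        by_cases hxa : x + 1 < a
        · rcases lt_max_iff.mp hxa with h | h
          · exact L1 x hx h
          · linarith [hx.1]
        · push_neg at hxa
          have hxb : 1 - x < b := by linarith
          rcases lt_max_iff.mp hxb with h | h
          · exact L2 x hx h
          · linarith [hx.2]
      have h2 : ENNReal.ofReal 2 ≤ ENNReal.ofReal α := by
        have := (measure_mono hsub).trans hvol
        rwa [Real.volume_Ioo, show (1 : ℝ) - (-1) = 2 by norm_num] at this
      have := (ENNReal.ofReal_le_ofReal_iff hα0.le).mp h2
      linarith
  have : v (-1) + v 1 ≤ a + b := add_le_add (le_max_left _ _) (le_max_left _ _)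
  linarith
end

section
/- Let 0 < α < 2 and let g₋, g₊ be real numbers with g₋ > g₊ > 0. Define u_∞ : [−1, 1] → ℝ by u_∞(x) = max((α − 1) − x, 0). Then u_∞ is Lipschitz with constant 1, nonnegative, with 𝓛^1({x ∈ (−1, 1) : u_∞(x) > 0}) = α, and for every nonnegative function v : [−1, 1] → ℝ that is Lipschitz with constant 1 with 𝓛^1({x ∈ (−1, 1) : v(x) > 0}) ≤ α, one has g₋·v(−1) + g₊·v(1) ≤ g₋·α = g₋·u_∞(−1) + g₊·u_∞(1), with equality if and only if v = u_∞ on [−1, 1]. In particular, u_∞ is the unique nonnegative maximizer of the limiting problem in this configuration. -/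
open MeasureTheory Set
open scoped ENNReal

/-- The one-dimensional example with boundary datum `g(−1) = g₋ > g(1) = g₊ > 0`:
`u_∞(x) = max((α − 1) − x, 0)` is the unique nonnegative maximizer of the limiting
problem on `Ω = (−1, 1)`: it is `1`-Lipschitz, nonnegative, saturates the volume
constraint, and strictly dominates the boundary functional
`v ↦ g₋ v(−1) + g₊ v(1)` over all nonnegative admissible `v`, with equality iff
`v = u_∞` on `[−1,1]`. -/
theorem one_dim_example_unique_maximizer (α : ℝ) (hα0 : 0 < α) (hα2 : α < 2)
    (gm gp : ℝ) (hgmp : gp < gm) (hgp : 0 < gp) :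
    LipschitzOnWith 1 (fun x => max ((α - 1) - x) 0) (Icc (-1) 1) ∧
    (∀ x : ℝ, 0 ≤ max ((α - 1) - x) 0) ∧
    volume {x ∈ Ioo (-1 : ℝ) 1 | 0 < max ((α - 1) - x) 0} = ENNReal.ofReal α ∧
    gm * α = gm * max ((α - 1) - (-1)) 0 + gp * max ((α - 1) - 1) 0 ∧
    ∀ v : ℝ → ℝ, (∀ x ∈ Icc (-1 : ℝ) 1, 0 ≤ v x) →
      LipschitzOnWith 1 v (Icc (-1) 1) →
      volume {x ∈ Ioo (-1 : ℝ) 1 | 0 < v x} ≤ ENNReal.ofReal α →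
      (gm * v (-1) + gp * v 1 ≤ gm * α ∧
        (gm * v (-1) + gp * v 1 = gm * α ↔
          ∀ x ∈ Icc (-1 : ℝ) 1, v x = max ((α - 1) - x) 0)) := by
  have hα1 : α - 1 < 1 := by linarith
  have hm1 : (-1:ℝ) ∈ Icc (-1:ℝ) 1 := by constructor <;> norm_num
  have hp1 : (1:ℝ) ∈ Icc (-1:ℝ) 1 := by constructor <;> norm_num
  have ham : (α-1) ∈ Icc (-1:ℝ) 1 := ⟨by linarith, by linarith⟩
  have hgm : 0 < gm := lt_trans hgp hgmp
  have hulip : LipschitzWith 1 (fun x : ℝ => max ((α-1)-x) 0) := by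
    apply LipschitzWith.of_dist_le_mul
    intro x y
    simp only [Real.dist_eq, NNReal.coe_one, one_mul]
    calc |max ((α-1)-x) 0 - max ((α-1)-y) 0| ≤ |((α-1)-x) - ((α-1)-y)| :=
          abs_max_sub_max_le_abs _ _ _
      _ = |x - y| := by rw [show ((α-1)-x) - ((α-1)-y) = -(x-y) by ring, abs_neg]
  refine ⟨hulip.lipschitzOnWith, fun x => le_max_right _ _, ?_, ?_, ?_⟩
  · have hset : {x ∈ Ioo (-1:ℝ) 1 | 0 < max ((α-1)-x) 0} = Ioo (-1:ℝ) (α-1) := by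
      ext x
      simp only [mem_setOf_eq, mem_Ioo, lt_max_iff, lt_self_iff_false, or_false, sub_pos]
      constructor
      · rintro ⟨⟨ha, _⟩, hc⟩; exact ⟨ha, by linarith⟩
      · rintro ⟨ha, hc⟩; exact ⟨⟨ha, by linarith⟩, by linarith⟩
    rw [hset, Real.volume_Ioo]; norm_num
  · rw [max_eq_left (by linarith : (0:ℝ) ≤ (α-1) - (-1)),
      max_eq_right (by linarith : (α-1)-1 ≤ (0:ℝ))]
    ring
  · intro v hv0 hvlip hvol
    set S := {x ∈ Ioo (-1:ℝ) 1 | 0 < v x} with hSdef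
    have hL : ∀ x ∈ Icc (-1:ℝ) 1, ∀ y ∈ Icc (-1:ℝ) 1, |v x - v y| ≤ |x - y| := by
      intro x hx y hy
      have := hvlip.dist_le_mul x hx y hy
      simpa [Real.dist_eq] using this
    have ha0 : 0 ≤ v (-1) := hv0 _ hm1
    have hb0 : 0 ≤ v 1 := hv0 _ hp1
    -- lower bounds from Lipschitz
    have ilow : ∀ x ∈ Icc (-1:ℝ) 1, v (-1) - (x + 1) ≤ v x := by
      intro x hx
      have h := hL x hx (-1) hm1
      have e1 : |x - (-1)| = x + 1 := by
        rw [show x - (-1) = x + 1 by ring]; exact abs_of_nonneg (by linarith [hx.1])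
      rw [e1] at h
      linarith [(abs_le.mp h).1]
    have ilow1 : ∀ x ∈ Icc (-1:ℝ) 1, v 1 - (1 - x) ≤ v x := by
      intro x hx
      have h := hL x hx 1 hp1
      have e1 : |x - 1| = 1 - x := by
        rw [show x - 1 = -(1 - x) by ring, abs_neg]; exact abs_of_nonneg (by linarith [hx.2])
      rw [e1] at h
      linarith [(abs_le.mp h).1]
    -- key inequality : v(-1) + v 1 ≤ α
    have hab : v (-1) + v 1 ≤ α := by
      by_contra hcon
      push_neg at hcon
      rcases le_or_gt (v (-1) + v 1) 2 with h2 | h2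
      · have hA : Ioo (-1:ℝ) (-1 + v (-1)) ⊆ S := by
          intro x hx
          have hxm : x ∈ Icc (-1:ℝ) 1 := ⟨hx.1.le, by linarith [hx.2]⟩
          exact ⟨⟨hx.1, by linarith [hx.2]⟩, by linarith [ilow x hxm, hx.2]⟩
        have hB : Ioo (1 - v 1) (1:ℝ) ⊆ S := by
          intro x hx
          have hxm : x ∈ Icc (-1:ℝ) 1 := ⟨by linarith [hx.1], hx.2.le⟩
          exact ⟨⟨by linarith [hx.1], hx.2⟩, by linarith [ilow1 x hxm, hx.1]⟩
        have hdisj : Disjoint (Ioo (-1:ℝ) (-1 + v (-1))) (Ioo (1 - v 1) (1:ℝ)) :=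
          Set.disjoint_left.mpr fun x hx hx' => by
            have := hx.2; have := hx'.1; linarith
        have hle : ENNReal.ofReal (v (-1) + v 1) ≤ ENNReal.ofReal α := by
          calc ENNReal.ofReal (v (-1) + v 1)
              = ENNReal.ofReal (v (-1)) + ENNReal.ofReal (v 1) := ENNReal.ofReal_add ha0 hb0
            _ = volume (Ioo (-1:ℝ) (-1 + v (-1))) + volume (Ioo (1 - v 1) (1:ℝ)) := by
                rw [Real.volume_Ioo, Real.volume_Ioo]; ring_nf
            _ = volume (Ioo (-1:ℝ) (-1 + v (-1)) ∪ Ioo (1 - v 1) (1:ℝ)) :=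
                (measure_union hdisj measurableSet_Ioo).symm
            _ ≤ volume S := measure_mono (union_subset hA hB)
            _ ≤ ENNReal.ofReal α := hvol
        rw [ENNReal.ofReal_le_ofReal_iff hα0.le] at hle
        linarith
      · have hA : Ioo (-1:ℝ) 1 ⊆ S := by
          intro x hx
          have hxm : x ∈ Icc (-1:ℝ) 1 := ⟨hx.1.le, hx.2.le⟩
          refine ⟨hx, ?_⟩
          by_contra hnp
          push_neg at hnp
          have i1 := ilow x hxm
          have i2 := ilow1 x hxm
          linarith
        have hle : ENNReal.ofReal 2 ≤ ENNReal.ofReal α := by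
          calc ENNReal.ofReal 2 = volume (Ioo (-1:ℝ) 1) := by rw [Real.volume_Ioo]; norm_num
            _ ≤ volume S := measure_mono hA
            _ ≤ ENNReal.ofReal α := hvol
        rw [ENNReal.ofReal_le_ofReal_iff hα0.le] at hle
        linarith
    constructor
    · nlinarith [mul_nonneg hgm.le (sub_nonneg.mpr hab),
        mul_nonneg (sub_nonneg.mpr hgmp.le) hb0]
    · constructor
      · intro heq
        -- equality forces v 1 = 0 and v (-1) = α
        have ksum : gm * (α - v (-1) - v 1) + (gm - gp) * v 1 = 0 := by linear_combination -heq
        have k1 : 0 ≤ gm * (α - v (-1) - v 1) := mul_nonneg hgm.le (by linarith)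
        have k2 : 0 ≤ (gm - gp) * v 1 := mul_nonneg (by linarith) hb0
        have hbz : v 1 = 0 := by
          have h0 : (gm - gp) * v 1 = 0 := by linarith
          rcases mul_eq_zero.mp h0 with h | h
          · exfalso; linarith
          · exact h
        have haz : v (-1) = α := by
          have h0 : gm * (α - v (-1) - v 1) = 0 := by linarith
          rcases mul_eq_zero.mp h0 with h | h
          · exfalso; linarith
          · linarith
        -- positivity set contains Ioo (-1) (α-1)
        have hSsub : Ioo (-1:ℝ) (α-1) ⊆ S := by
          intro x hx
          have hxm : x ∈ Icc (-1:ℝ) 1 := ⟨hx.1.le, (lt_trans hx.2 hα1).le⟩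
          refine ⟨⟨hx.1, lt_trans hx.2 hα1⟩, ?_⟩
          have := ilow x hxm
          rw [haz] at this
          linarith [hx.2]
        -- v vanishes on [α-1, 1]
        have hzero : ∀ x ∈ Icc (α-1:ℝ) 1, v x = 0 := by
          intro x₀ hx₀
          rcases eq_or_lt_of_le hx₀.2 with hx1 | hx1
          · rw [hx1]; exact hbz
          · refine le_antisymm ?_ (hv0 _ ⟨le_trans ham.1 hx₀.1, hx₀.2⟩)
            by_contra hpz
            push_neg at hpz
            set c := v x₀ with hc
            set l := max (x₀ - c) (α-1) with hl
            set r := min (x₀ + c) (1:ℝ) with hr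
            have hx₀m : x₀ ∈ Icc (-1:ℝ) 1 := ⟨le_trans ham.1 hx₀.1, hx₀.2⟩
            have hlr : l < r := by
              rw [hl, hr]
              simp only [max_lt_iff, lt_min_iff]
              exact ⟨⟨by linarith, by linarith [hx₀.1]⟩, ⟨by linarith [hx₀.1], hα1⟩⟩
            have hI : Ioo l r ⊆ S := by
              intro x hx
              have hxl : α - 1 < x := lt_of_le_of_lt (le_max_right _ _) hx.1
              have hxr : x < 1 := lt_of_lt_of_le hx.2 (min_le_right _ _)
              have hxm : x ∈ Icc (-1:ℝ) 1 := ⟨by linarith [ham.1], hxr.le⟩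
              refine ⟨⟨by linarith [ham.1], hxr⟩, ?_⟩
              have hd := hL x hxm x₀ hx₀m
              have habs : |x - x₀| < c := by
                rw [abs_lt]
                constructor
                · linarith [lt_of_le_of_lt (le_max_left (x₀ - c) (α-1)) hx.1]
                · linarith [lt_of_lt_of_le hx.2 (min_le_left (x₀ + c) 1)]
              linarith [(abs_le.mp hd).1]
            have hdisj : Disjoint (Ioo (-1:ℝ) (α-1)) (Ioo l r) :=
              Set.disjoint_left.mpr fun x hx hx' => by
                have h1 := hx.2
                have h2 := lt_of_le_of_lt (le_max_right (x₀ - c) (α-1)) hx'.1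
                linarith
            have hvol2 : ENNReal.ofReal α + ENNReal.ofReal (r - l) ≤ ENNReal.ofReal α := by
              calc ENNReal.ofReal α + ENNReal.ofReal (r - l)
                  = volume (Ioo (-1:ℝ) (α-1)) + volume (Ioo l r) := by
                    rw [Real.volume_Ioo, Real.volume_Ioo]
                    congr 2
                    ring
                _ = volume (Ioo (-1:ℝ) (α-1) ∪ Ioo l r) :=
                    (measure_union hdisj measurableSet_Ioo).symm
                _ ≤ volume S := measure_mono (union_subset hSsub hI)
                _ ≤ ENNReal.ofReal α := hvol
            have hle0 : ENNReal.ofReal (r - l) ≤ 0 :=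
              ENNReal.le_of_add_le_add_left ENNReal.ofReal_ne_top (by simpa using hvol2)
            have : r - l ≤ 0 := ENNReal.ofReal_eq_zero.mp (le_zero_iff.mp hle0)
            linarith
        intro x hx
        rcases le_or_gt x (α-1) with hxle | hxgt
        · rw [max_eq_left (by linarith : (0:ℝ) ≤ (α-1) - x)]
          have hz : v (α-1) = 0 := hzero _ ⟨le_refl _, by linarith⟩
          have i1 := ilow x hx
          rw [haz] at i1
          have hd := hL x hx (α-1) ham
          rw [hz, sub_zero] at hd
          have e : |x - (α-1)| = (α-1) - x := by
            rw [show x - (α-1) = -((α-1) - x) by ring, abs_neg]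
            exact abs_of_nonneg (by linarith)
          rw [e] at hd
          have := le_abs_self (v x)
          linarith
        · rw [max_eq_right (by linarith : (α-1) - x ≤ (0:ℝ))]
          exact hzero x ⟨hxgt.le, hx.2⟩
      · intro hvu
        have e1 : v (-1) = α := by
          rw [hvu (-1) hm1, max_eq_left (by linarith : (0:ℝ) ≤ (α-1) - (-1))]
          ring
        have e2 : v 1 = 0 := by
          rw [hvu 1 hp1]
          exact max_eq_right (by linarith)
        rw [e1, e2]
        ring
end

section
/- Let Ω ⊆ ℝ^N be a bounded open set, let g : ℝ^N → ℝ be nonnegative and integrable on ∂Ω with respect to 𝓗^{N−1}, and let α > 0. Suppose u : closure(Ω) → ℝ is Lipschitz with constant 1, satisfies 𝓛^N({x ∈ Ω : u(x) > 0}) ≤ α and ∫_{∂Ω} g u d𝓗^{N−1} > 0, and is a maximizer: ∫_{∂Ω} g u d𝓗^{N−1} ≥ ∫_{∂Ω} g v d𝓗^{N−1} for every v that is Lipschitz with constant 1 on closure(Ω) with 𝓛^N({x ∈ Ω : v(x) > 0}) ≤ α. Then for every L with 0 ≤ L < 1, u is not Lipschitz with constant L; that is, the optimal Lipschitz constant of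 u equals 1. -/
open MeasureTheory Metric Set
open scoped ENNReal NNReal

/-- A maximizer `u` of the limiting problem with nonnegative boundary data and
strictly positive boundary functional has optimal Lipschitz constant exactly `1`:
it is not `L`-Lipschitz on `closure Ω` for any `L < 1`. -/
theorem maximizer_optimal_lipschitz_constant_eq_one (N : ℕ)
    (Ω : Set (EuclideanSpace ℝ (Fin N))) (hΩo : IsOpen Ω)
    (hΩb : Bornology.IsBounded Ω)
    (g : EuclideanSpace ℝ (Fin N) → ℝ)
    (hg0 : ∀ x ∈ frontier Ω, 0 ≤ g x)
    (hgint : IntegrableOn g (frontier Ω) μH[(N : ℝ) - 1])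
    (α : ℝ) (hα : 0 < α)
    (u : EuclideanSpace ℝ (Fin N) → ℝ)
    (hu : LipschitzOnWith 1 u (closure Ω))
    (huα : volume {x ∈ Ω | 0 < u x} ≤ ENNReal.ofReal α)
    (hupos : 0 < ∫ x in frontier Ω, g x * u x ∂μH[(N : ℝ) - 1])
    (humax : ∀ v : EuclideanSpace ℝ (Fin N) → ℝ,
      LipschitzOnWith 1 v (closure Ω) →
      volume {x ∈ Ω | 0 < v x} ≤ ENNReal.ofReal α →
      ∫ x in frontier Ω, g x * v x ∂μH[(N : ℝ) - 1] ≤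
        ∫ x in frontier Ω, g x * u x ∂μH[(N : ℝ) - 1]) :
    ∀ L : ℝ≥0, L < 1 → ¬ LipschitzOnWith L u (closure Ω) := by
  intro L hL1 hLip
  set ε : ℝ := max (L : ℝ) (1/2) with hε
  have hε0 : 0 < ε := lt_max_of_lt_right (by norm_num)
  have hε1 : ε < 1 := max_lt (by exact_mod_cast hL1) (by norm_num)
  have hLip' : ∀ x ∈ closure Ω, ∀ y ∈ closure Ω,
      dist (u x) (u y) ≤ ε * dist x y := by
    intro x hx y hy
    have := hLip.dist_le_mul x hx y hy
    calc dist (u x) (u y) ≤ (L : ℝ) * dist x y := this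
      _ ≤ ε * dist x y := by
          exact mul_le_mul_of_nonneg_right (le_max_left _ _) dist_nonneg
  set v : EuclideanSpace ℝ (Fin N) → ℝ := fun x => ε⁻¹ * u x with hv
  have hvLip : LipschitzOnWith 1 v (closure Ω) := by
    rw [lipschitzOnWith_iff_dist_le_mul]
    intro x hx y hy
    have : dist (v x) (v y) = ε⁻¹ * dist (u x) (u y) := by
      simp only [hv, Real.dist_eq, ← mul_sub, abs_mul, abs_of_pos (inv_pos.2 hε0)]
    rw [this]
    calc ε⁻¹ * dist (u x) (u y) ≤ ε⁻¹ * (ε * dist x y) := by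
          exact mul_le_mul_of_nonneg_left (hLip' x hx y hy) (inv_pos.2 hε0).le
      _ = dist x y := by field_simp
      _ ≤ 1 * dist x y := by rw [one_mul]
  have hvα : volume {x ∈ Ω | 0 < v x} ≤ ENNReal.ofReal α := by
    have : {x ∈ Ω | 0 < v x} = {x ∈ Ω | 0 < u x} := by
      ext x
      simp only [hv, mem_setOf_eq, and_congr_right_iff]
      intro _
      constructor
      · intro h; nlinarith [inv_pos.2 hε0]
      · intro h; positivity
    rw [this]; exact huα
  have hint : ∫ x in frontier Ω, g x * v x ∂μH[(N : ℝ) - 1]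
      = ε⁻¹ * ∫ x in frontier Ω, g x * u x ∂μH[(N : ℝ) - 1] := by
    rw [← integral_const_mul]
    congr 1
    ext x
    simp [hv]; ring
  have hgt : ∫ x in frontier Ω, g x * u x ∂μH[(N : ℝ) - 1]
      < ∫ x in frontier Ω, g x * v x ∂μH[(N : ℝ) - 1] := by
    rw [hint]
    have h1 : 1 < ε⁻¹ := (one_lt_inv₀ hε0).2 hε1
    nlinarith
  exact absurd (humax v hvLip hvα) (not_le.2 hgt)
end
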